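/- arXiv:2510.22072 — 9 statements merged into one kernel-verified Lean document; each statement's English description precedes it below -/
import Mathlib

section
/- Let h : ℝ → ℝ be differentiable and strictly convex on ℝ, and let φ : ℝ → ℝ satisfy deriv h (φ t) = t for all t and φ (deriv h s) = s for all s. Define ρ(t) = t − t·φ(t) + h(φ(t)) − h(1). Then ρ is strictly concave on ℝ. -/
theorem stmt_1 (h φ : ℝ → ℝ) (hh : Differentiable ℝ h)
    (hconv : StrictConvexOn ℝ Set.univ h)
    (hinv1 : ∀ t, deriv h (φ t) = t) (hinv2 : ∀ s, φ (deriv h s) = s)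
    (ρ : ℝ → ℝ) (hρ : ∀ t, ρ t = t - t * φ t + h (φ t) - h 1) :
    StrictConcaveOn ℝ Set.univ ρ := by
  -- key tangent inequality: for x ≠ φ s, s*x - h x < s*φ s - h (φ s)
  have key : ∀ s x : ℝ, x ≠ φ s → s * x - h x < s * φ s - h (φ s) := by
    intro s x hx
    rcases lt_or_gt_of_ne hx with hlt | hgt
    · have := hconv.slope_lt_deriv (Set.mem_univ x) (Set.mem_univ (φ s)) hlt
        (hh (φ s))
      rw [hinv1] at this
      have h1 : (h (φ s) - h x) / (φ s - x) < s := by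
        simpa [slope_def_field] using this
      have h2 : h (φ s) - h x < s * (φ s - x) :=
        (div_lt_iff₀ (by linarith)).mp h1
      nlinarith
    · have := hconv.deriv_lt_slope (Set.mem_univ (φ s)) (Set.mem_univ x) hgt
        (hh (φ s))
      rw [hinv1] at this
      have h1 : s < (h x - h (φ s)) / (x - φ s) := by
        simpa [slope_def_field] using this
      have h2 : s * (x - φ s) < h x - h (φ s) :=
        (lt_div_iff₀ (by linarith)).mp h1 |>.trans_le le_rfl
      nlinarith
  have φinj : Function.Injective φ := by
    intro a b hab
    have := hinv1 a
    rw [hab, hinv1 b] at this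
    exact this.symm
  refine ⟨convex_univ, fun x _ y _ hxy a b ha hb hab => ?_⟩
  set t := a * x + b * y with ht
  have htx : t ≠ x := by
    intro hh2
    apply hxy
    have : b * (y - x) = 0 := by linear_combination hh2 - x * hab
    have := (mul_eq_zero.mp this).resolve_left (ne_of_gt hb)
    linarith
  have hφ : φ t ≠ φ x := fun e => htx (φinj e)
  have k1 : x * φ t - h (φ t) < x * φ x - h (φ x) := key x (φ t) hφ
  have k2 : y * φ t - h (φ t) ≤ y * φ y - h (φ y) := by
    by_cases he : φ t = φ y
    · rw [he]
    · exact le_of_lt (key y (φ t) he)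
  have expand : t * φ t - h (φ t) = a * (x * φ t - h (φ t)) + b * (y * φ t - h (φ t)) := by
    rw [ht]; linear_combination h (φ t) * hab
  have hh1 : a * h 1 + b * h 1 = h 1 := by linear_combination h 1 * hab
  simp only [smul_eq_mul, hρ]
  rw [← ht]
  have k1' := mul_lt_mul_of_pos_left k1 ha
  have k2' := mul_le_mul_of_nonneg_left k2 hb.le
  nlinarith [k1', k2', expand, hh1, ht]
end

section
/- Let n, K, L be natural numbers with n ≥ 1, let Z : Fin n → ℝ take only the values 0 and 1, and let c : Fin n → Fin K → ℝ and g : Fin n → Fin L → ℝ. Let h : ℝ → ℝ be differentiable and strictly convex, let φ : ℝ → ℝ satisfy deriv h (φ t) = t for all t and φ (deriv h s) = s for all s, and define ρ(t) = t − t·φ(t) + h(φ(t)) − h(1). Then for every weight vector w : Fin n → ℝ satisfying the balance constraints, and for all α₀, α₁ : Fin K → ℝ and γ : Fin L → ℝ, one has (1/n)·Σᵢ h(1 − wᵢ) ≥ h(1) − (1/n)·Σᵢ [ −Zᵢ·ρ(⟨α₁, c i⟩ + ⟨γ, g i⟩) − (1 − Zᵢ)·ρ(⟨α₀, c i⟩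 − ⟨γ, g i⟩) + ⟨α₁, c i⟩ + ⟨α₀, c i⟩ ], where ⟨·,·⟩ denotes the Euclidean inner product (weak duality between the partially retargeted balancing problem and its dual). -/
/-- Gradient inequality for a differentiable convex function on ℝ. -/
lemma grad_ineq (h : ℝ → ℝ) (hh : Differentiable ℝ h)
    (hconv : ConvexOn ℝ Set.univ h) (x s : ℝ) :
    h s + deriv h s * (x - s) ≤ h x := by
  rcases lt_trichotomy x s with hlt | heq | hgt
  · have := hconv.slope_le_deriv (Set.mem_univ x) (Set.mem_univ s) hlt (hh s)
    rw [slope_def_field, div_le_iff₀ (by linarith)] at this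
    nlinarith
  · simp [heq]
  · have := hconv.deriv_le_slope (Set.mem_univ s) (Set.mem_univ x) hgt (hh s)
    rw [slope_def_field, le_div_iff₀ (by linarith)] at this
    nlinarith

/-- Swap a weighted double sum. -/
lemma swap_sum {n M : ℕ} (s : Fin n → ℝ) (a : Fin M → ℝ) (d : Fin n → Fin M → ℝ) :
    ∑ i, s i * ∑ k, a k * d i k = ∑ k, a k * ∑ i, s i * d i k := by
  simp_rw [Finset.mul_sum]
  rw [Finset.sum_comm]
  exact Finset.sum_congr rfl fun k _ => Finset.sum_congr rfl fun i _ => by ring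

theorem stmt_3 (n K L : ℕ) (hn : 1 ≤ n) (Z : Fin n → ℝ)
    (hZ : ∀ i, Z i = 0 ∨ Z i = 1)
    (c : Fin n → Fin K → ℝ) (g : Fin n → Fin L → ℝ)
    (h φ : ℝ → ℝ) (hh : Differentiable ℝ h)
    (hconv : StrictConvexOn ℝ Set.univ h)
    (hinv1 : ∀ t, deriv h (φ t) = t) (hinv2 : ∀ s, φ (deriv h s) = s)
    (ρ : ℝ → ℝ) (hρ : ∀ t, ρ t = t - t * φ t + h (φ t) - h 1)
    (w : Fin n → ℝ)
    (hbal1 : ∀ k, (1 / (n : ℝ)) * ∑ i, w i * Z i * c i k = (1 / (n : ℝ)) * ∑ i, c i k)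
    (hbal0 : ∀ k, (1 / (n : ℝ)) * ∑ i, w i * (1 - Z i) * c i k = (1 / (n : ℝ)) * ∑ i, c i k)
    (hbalg : ∀ l, ∑ i, w i * Z i * g i l = ∑ i, w i * (1 - Z i) * g i l)
    (α₀ α₁ : Fin K → ℝ) (γ : Fin L → ℝ) :
    (1 / (n : ℝ)) * ∑ i, h (1 - w i) ≥
      h 1 - (1 / (n : ℝ)) * ∑ i,
        (-(Z i) * ρ ((∑ k, α₁ k * c i k) + ∑ l, γ l * g i l)
          - (1 - Z i) * ρ ((∑ k, α₀ k * c i k) - ∑ l, γ l * g i l)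
          + (∑ k, α₁ k * c i k) + ∑ k, α₀ k * c i k) := by
  have hn0 : (0:ℝ) < (n:ℝ) := by exact_mod_cast Nat.lt_of_lt_of_le Nat.zero_lt_one hn
  set A : Fin n → ℝ := fun i => (∑ k, α₁ k * c i k) + ∑ l, γ l * g i l with hA
  set B : Fin n → ℝ := fun i => (∑ k, α₀ k * c i k) - ∑ l, γ l * g i l with hB
  set t : Fin n → ℝ := fun i => Z i * A i + (1 - Z i) * B i with ht
  have key : ∀ i, ρ (t i) + h 1 - t i * w i ≤ h (1 - w i) := by
    intro i
    have := grad_ineq h hh hconv.convexOn (1 - w i) (φ (t i))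
    rw [hinv1] at this
    rw [hρ]; linarith
  have hρt : ∀ i, ρ (t i) = Z i * ρ (A i) + (1 - Z i) * ρ (B i) := by
    intro i
    rcases hZ i with h0 | h1
    · simp [ht, h0]
    · simp [ht, h1]
  have hbal1' : ∀ k, ∑ i, w i * Z i * c i k = ∑ i, c i k := fun k =>
    mul_left_cancel₀ (by positivity : (1 / (n:ℝ)) ≠ 0) (hbal1 k)
  have hbal0' : ∀ k, ∑ i, w i * (1 - Z i) * c i k = ∑ i, c i k := fun k =>
    mul_left_cancel₀ (by positivity : (1 / (n:ℝ)) ≠ 0) (hbal0 k)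
  have hid : ∑ i, t i * w i = ∑ i, ((∑ k, α₁ k * c i k) + ∑ k, α₀ k * c i k) := by
    have e1 : ∑ i, (w i * Z i) * (∑ k, α₁ k * c i k) = ∑ i, ∑ k, α₁ k * c i k := by
      rw [swap_sum]
      simp_rw [hbal1', Finset.mul_sum]
      exact Finset.sum_comm
    have e0 : ∑ i, (w i * (1 - Z i)) * (∑ k, α₀ k * c i k) = ∑ i, ∑ k, α₀ k * c i k := by
      rw [swap_sum]
      simp_rw [hbal0', Finset.mul_sum]
      exact Finset.sum_comm
    have eg : ∑ i, (w i * Z i) * (∑ l, γ l * g i l)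
        = ∑ i, (w i * (1 - Z i)) * (∑ l, γ l * g i l) := by
      rw [swap_sum (fun i => w i * Z i) γ (fun i l => g i l),
        swap_sum (fun i => w i * (1 - Z i)) γ (fun i l => g i l)]
      exact Finset.sum_congr rfl fun l _ => by rw [hbalg]
    have expand : ∑ i, t i * w i
        = (∑ i, (w i * Z i) * (∑ k, α₁ k * c i k)) + (∑ i, (w i * Z i) * (∑ l, γ l * g i l))
          + ((∑ i, (w i * (1 - Z i)) * (∑ k, α₀ k * c i k))
            - ∑ i, (w i * (1 - Z i)) * (∑ l, γ l * g i l)) := by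
      simp_rw [ht, hA, hB]
      rw [← Finset.sum_add_distrib, ← Finset.sum_sub_distrib, ← Finset.sum_add_distrib]
      exact Finset.sum_congr rfl fun i _ => by ring
    rw [expand, e1, e0, eg, Finset.sum_add_distrib]
    ring
  have hsum : ∑ i, (ρ (t i) + h 1 - t i * w i) ≤ ∑ i, h (1 - w i) :=
    Finset.sum_le_sum fun i _ => key i
  rw [ge_iff_le, sub_le_iff_le_add]
  have h1 : ∑ i, (ρ (t i) + h 1 - t i * w i)
      = (∑ i, ρ (t i)) + n * h 1 - ∑ i, t i * w i := by
    rw [Finset.sum_sub_distrib, Finset.sum_add_distrib]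
    simp [mul_comm]
  have h2 : (∑ i, (-(Z i) * ρ (A i) - (1 - Z i) * ρ (B i)
        + (∑ k, α₁ k * c i k) + ∑ k, α₀ k * c i k))
      = -(∑ i, ρ (t i)) + ∑ i, ((∑ k, α₁ k * c i k) + ∑ k, α₀ k * c i k) := by
    simp_rw [hρt]
    rw [← Finset.sum_neg_distrib, ← Finset.sum_add_distrib]
    exact Finset.sum_congr rfl fun i _ => by ring
  have final : (n:ℝ) * h 1 ≤ (∑ i, h (1 - w i))
      + ∑ i, (-(Z i) * ρ (A i) - (1 - Z i) * ρ (B i)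
        + (∑ k, α₁ k * c i k) + ∑ k, α₀ k * c i k) := by
    rw [h2, ← hid]
    rw [h1] at hsum
    linarith
  calc h 1 = (1 / (n:ℝ)) * ((n:ℝ) * h 1) := by field_simp
    _ ≤ (1 / (n:ℝ)) * ((∑ i, h (1 - w i))
        + ∑ i, (-(Z i) * ρ (A i) - (1 - Z i) * ρ (B i)
          + (∑ k, α₁ k * c i k) + ∑ k, α₀ k * c i k)) := by
        apply mul_le_mul_of_nonneg_left final (by positivity)
    _ = (1 / (n:ℝ)) * ∑ i, h (1 - w i)
        + (1 / (n:ℝ)) * ∑ i, (-(Z i) * ρ (A i) - (1 - Z i) * ρ (B i)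
          + (∑ k, α₁ k * c i k) + ∑ k, α₀ k * c i k) := by ring
end

section
/- Let n, K, L be natural numbers with n ≥ 1, let Z : Fin n → ℝ take only the values 0 and 1, and let c : Fin n → Fin K → ℝ and g : Fin n → Fin L → ℝ. Let h : ℝ → ℝ be differentiable and strictly convex, let φ : ℝ → ℝ satisfy deriv h (φ t) = t for all t and φ (deriv h s) = s for all s. Let α̂₀, α̂₁ : Fin K → ℝ and γ̂ : Fin L → ℝ, and define the weights w*ᵢ = Zᵢ·(1 − φ(⟨α̂₁, c i⟩ + ⟨γ̂, g i⟩)) + (1 − Zᵢ)·(1 − φ(⟨α̂₀, c i⟩ − ⟨γ̂, g i⟩)). If w* satisfies the balance constraints, then for every w : Fin n → ℝ satisfying the balance constraints, Σᵢ h(1 − w*ᵢ) ≤ Σᵢ h(1 − wᵢ); that is, w* minimizes the total dispersion Σᵢ D(wᵢ) = Σᵢ h(1 − wᵢ) among all weights satisfying the balance constraints. -/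
/-- Tangent line lies below a convex differentiable function. -/
lemma tangent_le_of_convexOn {h : ℝ → ℝ} (hh : Differentiable ℝ h)
    (hc : ConvexOn ℝ Set.univ h) (x y : ℝ) :
    h x + deriv h x * (y - x) ≤ h y := by
  rcases lt_trichotomy x y with hxy | rfl | hyx
  · have hs := hc.deriv_le_slope (Set.mem_univ x) (Set.mem_univ y) hxy (hh x)
    rw [slope_def_field] at hs
    have hpos : 0 < y - x := by linarith
    rw [le_div_iff₀ hpos] at hs
    linarith
  · simp
  · have hs := hc.slope_le_deriv (Set.mem_univ y) (Set.mem_univ x) hyx (hh x)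
    rw [slope_def_field] at hs
    have hpos : 0 < x - y := by linarith
    rw [div_le_iff₀ hpos] at hs
    nlinarith

/-- The balance constraints of the partially retargeted balancing problem. -/
def BalanceConstraints (n K L : ℕ) (Z : Fin n → ℝ)
    (c : Fin n → Fin K → ℝ) (g : Fin n → Fin L → ℝ) (w : Fin n → ℝ) : Prop :=
  (∀ k, (1 / (n : ℝ)) * ∑ i, w i * Z i * c i k = (1 / (n : ℝ)) * ∑ i, c i k) ∧
  (∀ k, (1 / (n : ℝ)) * ∑ i, w i * (1 - Z i) * c i k = (1 / (n : ℝ)) * ∑ i, c i k) ∧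
  (∀ l, ∑ i, w i * Z i * g i l = ∑ i, w i * (1 - Z i) * g i l)

theorem stmt_4 (n K L : ℕ) (hn : 1 ≤ n) (Z : Fin n → ℝ)
    (hZ : ∀ i, Z i = 0 ∨ Z i = 1)
    (c : Fin n → Fin K → ℝ) (g : Fin n → Fin L → ℝ)
    (h φ : ℝ → ℝ) (hh : Differentiable ℝ h)
    (hconv : StrictConvexOn ℝ Set.univ h)
    (hinv1 : ∀ t, deriv h (φ t) = t) (hinv2 : ∀ s, φ (deriv h s) = s)
    (a0 a1 : Fin K → ℝ) (gam : Fin L → ℝ)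
    (wstar : Fin n → ℝ)
    (hwstar : ∀ i, wstar i =
      Z i * (1 - φ ((∑ k, a1 k * c i k) + ∑ l, gam l * g i l))
        + (1 - Z i) * (1 - φ ((∑ k, a0 k * c i k) - ∑ l, gam l * g i l)))
    (hfeas : BalanceConstraints n K L Z c g wstar) :
    ∀ w : Fin n → ℝ, BalanceConstraints n K L Z c g w →
      ∑ i, h (1 - wstar i) ≤ ∑ i, h (1 - w i) := by
  intro w hw
  set d : Fin n → ℝ := fun i => wstar i - w i with hd
  have hnpos : (0 : ℝ) < (n : ℝ) := by exact_mod_cast Nat.lt_of_lt_of_le Nat.zero_lt_one hn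
  have hne : (1 / (n : ℝ)) ≠ 0 := by positivity
  obtain ⟨hf1, hf2, hf3⟩ := hfeas
  obtain ⟨hw1, hw2, hw3⟩ := hw
  -- balance consequences
  have hA : ∀ k, ∑ i, Z i * c i k * d i = 0 := by
    intro k
    have e1 : ∑ i, wstar i * Z i * c i k = ∑ i, w i * Z i * c i k :=
      mul_left_cancel₀ hne ((hf1 k).trans (hw1 k).symm)
    have : ∑ i, Z i * c i k * d i
        = ∑ i, wstar i * Z i * c i k - ∑ i, w i * Z i * c i k := by
      rw [← Finset.sum_sub_distrib]
      exact Finset.sum_congr rfl fun i _ => by simp only [hd]; ring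
    rw [this, e1, sub_self]
  have hB : ∀ k, ∑ i, (1 - Z i) * c i k * d i = 0 := by
    intro k
    have e1 : ∑ i, wstar i * (1 - Z i) * c i k = ∑ i, w i * (1 - Z i) * c i k :=
      mul_left_cancel₀ hne ((hf2 k).trans (hw2 k).symm)
    have : ∑ i, (1 - Z i) * c i k * d i
        = ∑ i, wstar i * (1 - Z i) * c i k - ∑ i, w i * (1 - Z i) * c i k := by
      rw [← Finset.sum_sub_distrib]
      exact Finset.sum_congr rfl fun i _ => by simp only [hd]; ring
    rw [this, e1, sub_self]
  have hG : ∀ l, ∑ i, (Z i * g i l * d i - (1 - Z i) * g i l * d i) = 0 := by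
    intro l
    have : ∑ i, (Z i * g i l * d i - (1 - Z i) * g i l * d i)
        = (∑ i, wstar i * Z i * g i l - ∑ i, wstar i * (1 - Z i) * g i l)
          - (∑ i, w i * Z i * g i l - ∑ i, w i * (1 - Z i) * g i l) := by
      rw [← Finset.sum_sub_distrib, ← Finset.sum_sub_distrib, ← Finset.sum_sub_distrib]
      exact Finset.sum_congr rfl fun i _ => by simp only [hd]; ring
    rw [this, hf3 l, hw3 l, sub_self, sub_self, sub_self]
  -- derivative at the optimal weights
  have hD : ∀ i, deriv h (1 - wstar i)
      = Z i * ((∑ k, a1 k * c i k) + ∑ l, gam l * g i l)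
        + (1 - Z i) * ((∑ k, a0 k * c i k) - ∑ l, gam l * g i l) := by
    intro i
    rcases hZ i with h0 | h1
    · have e : 1 - wstar i = φ ((∑ k, a0 k * c i k) - ∑ l, gam l * g i l) := by
        rw [hwstar i, h0]; ring
      rw [e, hinv1, h0]; ring
    · have e : 1 - wstar i = φ ((∑ k, a1 k * c i k) + ∑ l, gam l * g i l) := by
        rw [hwstar i, h1]; ring
      rw [e, hinv1, h1]; ring
  have expand : ∀ i, deriv h (1 - wstar i) * d i
      = (∑ k, a1 k * (Z i * c i k * d i))
        + (∑ k, a0 k * ((1 - Z i) * c i k * d i))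
        + ∑ l, gam l * (Z i * g i l * d i - (1 - Z i) * g i l * d i) := by
    intro i
    rw [hD i]
    have h1 : ∑ k, a1 k * (Z i * c i k * d i) = (Z i * d i) * ∑ k, a1 k * c i k := by
      rw [Finset.mul_sum]; exact Finset.sum_congr rfl fun k _ => by ring
    have h2 : ∑ k, a0 k * ((1 - Z i) * c i k * d i)
        = ((1 - Z i) * d i) * ∑ k, a0 k * c i k := by
      rw [Finset.mul_sum]; exact Finset.sum_congr rfl fun k _ => by ring
    have h3 : ∑ l, gam l * (Z i * g i l * d i - (1 - Z i) * g i l * d i)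
        = ((Z i - (1 - Z i)) * d i) * ∑ l, gam l * g i l := by
      rw [Finset.mul_sum]; exact Finset.sum_congr rfl fun l _ => by ring
    rw [h1, h2, h3]; ring
  have key : ∑ i, deriv h (1 - wstar i) * d i = 0 := by
    have step : ∑ i, deriv h (1 - wstar i) * d i
        = (∑ k, a1 k * ∑ i, Z i * c i k * d i)
          + (∑ k, a0 k * ∑ i, (1 - Z i) * c i k * d i)
          + ∑ l, gam l * ∑ i, (Z i * g i l * d i - (1 - Z i) * g i l * d i) := by
      rw [Finset.sum_congr rfl fun i _ => expand i, Finset.sum_add_distrib,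
        Finset.sum_add_distrib]
      congr 1
      · congr 1
        · rw [Finset.sum_comm]
          exact Finset.sum_congr rfl fun k _ => (Finset.mul_sum _ _ _).symm
        · rw [Finset.sum_comm]
          exact Finset.sum_congr rfl fun k _ => (Finset.mul_sum _ _ _).symm
      · rw [Finset.sum_comm]
        exact Finset.sum_congr rfl fun l _ => (Finset.mul_sum _ _ _).symm
    rw [step]
    simp [hA, hB, hG]
  have tang : ∀ i, h (1 - wstar i) + deriv h (1 - wstar i) * d i ≤ h (1 - w i) := by
    intro i
    have := tangent_le_of_convexOn hh hconv.convexOn (1 - wstar i) (1 - w i)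
    have e : (1 - w i) - (1 - wstar i) = d i := by simp only [hd]; ring
    rwa [e] at this
  calc ∑ i, h (1 - wstar i)
      = ∑ i, (h (1 - wstar i) + deriv h (1 - wstar i) * d i) := by
        rw [Finset.sum_add_distrib, key, add_zero]
    _ ≤ ∑ i, h (1 - w i) := Finset.sum_le_sum fun i _ => tang i
end

section
/- Let n, K, L be natural numbers with n ≥ 1, let Z : Fin n → ℝ take only the values 0 and 1, and let c : Fin n → Fin K → ℝ and g : Fin n → Fin L → ℝ. Let ρ : ℝ → ℝ be differentiable. Define the dual objective q : (Fin K → ℝ) × (Fin K → ℝ) × (Fin L → ℝ) → ℝ by q(α₀, α₁, γ) = (1/n)·Σᵢ [ −Zᵢ·ρ(⟨α₁, c i⟩ + ⟨γ, g i⟩) − (1 − Zᵢ)·ρ(⟨α₀, c i⟩ − ⟨γ, g i⟩) + ⟨α₁, c i⟩ + ⟨α₀, c i⟩ ]. If the Fréchet derivative of q vanishes at (α̂₀, α̂₁, γ̂), then the weights w*ᵢ = Zᵢ·ρ′(⟨α̂₁, c i⟩ + ⟨γ̂, g i⟩) + (1 − Zᵢ)·ρ′(⟨α̂₀, c i⟩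 − ⟨γ̂, g i⟩) satisfy the balance constraints: for every k, (1/n)·Σᵢ w*ᵢ·Zᵢ·c i k = (1/n)·Σᵢ c i k and (1/n)·Σᵢ w*ᵢ·(1−Zᵢ)·c i k = (1/n)·Σᵢ c i k, and for every l, Σᵢ w*ᵢ·Zᵢ·g i l = Σᵢ w*ᵢ·(1−Zᵢ)·g i l. -/
/-
The treated and control scores `s₁ᵢ`, `s₀ᵢ` are linear in the dual variable, so the derivative
of `q` at `x` along `v` is the average over units of
`-Zᵢ ρ'(s₁ᵢ x) s₁ᵢ v - (1 - Zᵢ) ρ'(s₀ᵢ x) s₀ᵢ v + ⟨v₁, cᵢ⟩ + ⟨v₀, cᵢ⟩`.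
Since `Zᵢ ∈ {0, 1}`, `w*ᵢ Zᵢ = Zᵢ ρ'(s₁ᵢ x)` and `w*ᵢ (1 - Zᵢ) = (1 - Zᵢ) ρ'(s₀ᵢ x)`, so
stationarity along the coordinate directions of `α₁`, `α₀` and `γ` gives the three balance
conditions.
-/

open Matrix

theorem DifferentiableAt.hasDerivAt_comp_add_mul {ρ : ℝ → ℝ} {a : ℝ}
    (hρ : DifferentiableAt ℝ ρ a) (b : ℝ) :
    HasDerivAt (fun t => ρ (a + t * b)) (deriv ρ a * b) 0 :=
  hρ.hasDerivAt.comp_of_eq 0 ((hasDerivAt_mul_const b).const_add a) (by simp)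

theorem binary_mix_mul_self {z a b : ℝ} (hz : z = 0 ∨ z = 1) :
    (z * a + (1 - z) * b) * z = z * a := by
  rcases hz with rfl | rfl <;> ring

theorem binary_mix_mul_one_sub {z a b : ℝ} (hz : z = 0 ∨ z = 1) :
    (z * a + (1 - z) * b) * (1 - z) = (1 - z) * b := by
  rcases hz with rfl | rfl <;> ring

noncomputable section

namespace RetargetedBalancing

/-- A point `(α₀, α₁, γ)` of the dual space is stored as `(p.1, p.2.1, p.2.2)`. -/
abbrev DualVar (K L : ℕ) : Type := (Fin K → ℝ) × (Fin K → ℝ) × (Fin L → ℝ)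

variable {n K L : ℕ} (Z : Fin n → ℝ) (c : Fin n → Fin K → ℝ) (g : Fin n → Fin L → ℝ)
  (ρ : ℝ → ℝ)

def treatedScore (p : DualVar K L) (i : Fin n) : ℝ :=
  p.2.1 ⬝ᵥ c i + p.2.2 ⬝ᵥ g i

def controlScore (p : DualVar K L) (i : Fin n) : ℝ :=
  p.1 ⬝ᵥ c i - p.2.2 ⬝ᵥ g i

def dualObjective (p : DualVar K L) : ℝ :=
  (1 / (n : ℝ)) * ∑ i, (-(Z i) * ρ (treatedScore c g p i) - (1 - Z i) * ρ (controlScore c g p i)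
    + p.2.1 ⬝ᵥ c i + p.1 ⬝ᵥ c i)

def dualWeight (p : DualVar K L) (i : Fin n) : ℝ :=
  Z i * deriv ρ (treatedScore c g p i) + (1 - Z i) * deriv ρ (controlScore c g p i)

theorem treatedScore_add_smul (x v : DualVar K L) (t : ℝ) (i : Fin n) :
    treatedScore c g (x + t • v) i = treatedScore c g x i + t * treatedScore c g v i := by
  simp only [treatedScore, Prod.fst_add, Prod.snd_add, Prod.smul_fst, Prod.smul_snd,
    add_dotProduct, smul_dotProduct, smul_eq_mul]
  ring

theorem controlScore_add_smul (x v : DualVar K L) (t : ℝ) (i : Fin n) :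
    controlScore c g (x + t • v) i = controlScore c g x i + t * controlScore c g v i := by
  simp only [controlScore, Prod.fst_add, Prod.snd_add, Prod.smul_fst, Prod.smul_snd,
    add_dotProduct, smul_dotProduct, smul_eq_mul]
  ring

variable {ρ}

theorem differentiable_dualObjective (hρ : Differentiable ℝ ρ) :
    Differentiable ℝ (dualObjective Z c g ρ) := by
  unfold dualObjective treatedScore controlScore dotProduct
  fun_prop

theorem hasLineDerivAt_dualObjective (hρ : Differentiable ℝ ρ) (x v : DualVar K L) :
    HasLineDerivAt ℝ (dualObjective Z c g ρ)
      ((1 / (n : ℝ)) * ∑ i,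
        (-(Z i) * (deriv ρ (treatedScore c g x i) * treatedScore c g v i)
          - (1 - Z i) * (deriv ρ (controlScore c g x i) * controlScore c g v i)
          + v.2.1 ⬝ᵥ c i + v.1 ⬝ᵥ c i)) x v := by
  unfold HasLineDerivAt dualObjective
  simp only [treatedScore_add_smul, controlScore_add_smul, Prod.fst_add, Prod.snd_add,
    Prod.smul_fst, Prod.smul_snd, add_dotProduct, smul_dotProduct, smul_eq_mul]
  refine (HasDerivAt.fun_sum fun i _ => ?_).const_mul _
  exact (((((hρ _).hasDerivAt_comp_add_mul _).const_mul _).sub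
    (((hρ _).hasDerivAt_comp_add_mul _).const_mul _)).add
    ((hasDerivAt_mul_const _).const_add _)).add ((hasDerivAt_mul_const _).const_add _)

theorem balance_of_fderiv_dualObjective_eq_zero (hZ : ∀ i, Z i = 0 ∨ Z i = 1)
    (hρ : Differentiable ℝ ρ) (hn : (n : ℝ) ≠ 0) {x : DualVar K L}
    (hx : fderiv ℝ (dualObjective Z c g ρ) x = 0) (v : DualVar K L) :
    ∑ i, (dualWeight Z c g ρ x i * Z i * treatedScore c g v i
        + dualWeight Z c g ρ x i * (1 - Z i) * controlScore c g v i)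
      = ∑ i, (v.2.1 ⬝ᵥ c i + v.1 ⬝ᵥ c i) := by
  have hzero : HasLineDerivAt ℝ (dualObjective Z c g ρ) 0 x v := by
    simpa [hx] using ((differentiable_dualObjective Z c g hρ x).hasFDerivAt).hasLineDerivAt v
  have hderiv := (hasLineDerivAt_dualObjective Z c g hρ x v).unique hzero
  have hsum : ∑ i, ((v.2.1 ⬝ᵥ c i + v.1 ⬝ᵥ c i)
      - (dualWeight Z c g ρ x i * Z i * treatedScore c g v i
        + dualWeight Z c g ρ x i * (1 - Z i) * controlScore c g v i)) = 0 := by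
    rw [← (mul_eq_zero.mp hderiv).resolve_left (one_div_ne_zero hn)]
    refine Finset.sum_congr rfl fun i _ => ?_
    rw [dualWeight, binary_mix_mul_self (hZ i), binary_mix_mul_one_sub (hZ i)]
    ring
  rwa [Finset.sum_sub_distrib, sub_eq_zero, eq_comm] at hsum

end RetargetedBalancing

end

open RetargetedBalancing

theorem stmt_5 (n K L : ℕ) (hn : 1 ≤ n) (Z : Fin n → ℝ)
    (hZ : ∀ i, Z i = 0 ∨ Z i = 1)
    (c : Fin n → Fin K → ℝ) (g : Fin n → Fin L → ℝ)
    (ρ : ℝ → ℝ) (hρ : Differentiable ℝ ρ)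
    (q : (Fin K → ℝ) × (Fin K → ℝ) × (Fin L → ℝ) → ℝ)
    (hq : ∀ p : (Fin K → ℝ) × (Fin K → ℝ) × (Fin L → ℝ),
      q p = (1 / (n : ℝ)) * ∑ i,
        (-(Z i) * ρ ((∑ k, p.2.1 k * c i k) + ∑ l, p.2.2 l * g i l)
          - (1 - Z i) * ρ ((∑ k, p.1 k * c i k) - ∑ l, p.2.2 l * g i l)
          + (∑ k, p.2.1 k * c i k) + ∑ k, p.1 k * c i k))
    (a0 a1 : Fin K → ℝ) (gam : Fin L → ℝ)
    (hcrit : fderiv ℝ q (a0, a1, gam) = 0)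
    (wstar : Fin n → ℝ)
    (hwstar : ∀ i, wstar i =
      Z i * deriv ρ ((∑ k, a1 k * c i k) + ∑ l, gam l * g i l)
        + (1 - Z i) * deriv ρ ((∑ k, a0 k * c i k) - ∑ l, gam l * g i l)) :
    (∀ k, (1 / (n : ℝ)) * ∑ i, wstar i * Z i * c i k = (1 / (n : ℝ)) * ∑ i, c i k) ∧
    (∀ k, (1 / (n : ℝ)) * ∑ i, wstar i * (1 - Z i) * c i k = (1 / (n : ℝ)) * ∑ i, c i k) ∧
    (∀ l, ∑ i, wstar i * Z i * g i l = ∑ i, wstar i * (1 - Z i) * g i l) := by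
  obtain rfl : q = dualObjective Z c g ρ := funext hq
  obtain rfl : wstar = dualWeight Z c g ρ (a0, a1, gam) := funext hwstar
  have hbalance := balance_of_fderiv_dualObjective_eq_zero Z c g hZ hρ
    (Nat.cast_ne_zero.mpr (by omega)) hcrit
  refine ⟨fun k => ?_, fun k => ?_, fun l => ?_⟩
  · exact congrArg (1 / (n : ℝ) * ·) <| by
      simpa [treatedScore, controlScore] using hbalance (0, Pi.single k 1, 0)
  · exact congrArg (1 / (n : ℝ) * ·) <| by
      simpa [treatedScore, controlScore] using hbalance (Pi.single k 1, 0, 0)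
  · simpa [treatedScore, controlScore, Finset.sum_add_distrib, add_neg_eq_zero]
      using hbalance (0, 0, Pi.single l 1)
end

section
/- Let K, L be natural numbers, α₀, α₁, cvec : Fin K → ℝ, γ, gvec : Fin L → ℝ, and e ∈ ℝ with 0 < e < 1. Suppose the entropy implied propensity score equations hold: 1/e = exp(−(⟨α₁, cvec⟩ + ⟨γ, gvec⟩) − 1) and 1/(1 − e) = exp(−(⟨α₀, cvec⟩ − ⟨γ, gvec⟩) − 1). Then log(e·(1 − e)) = ⟨α₀ + α₁, cvec⟩ + 2. In particular, the implied Bernoulli variance e·(1 − e) = Var(Z | X = x) is a function of ⟨(α₀ + α₁), c(x)⟩ alone and does not depend on γ or g(x). -/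
theorem stmt_8 (K L : ℕ) (α₀ α₁ cvec : Fin K → ℝ) (γ gvec : Fin L → ℝ)
    (e : ℝ) (he0 : 0 < e) (he1 : e < 1)
    (h1 : 1 / e = Real.exp (-((∑ k, α₁ k * cvec k) + ∑ l, γ l * gvec l) - 1))
    (h0 : 1 / (1 - e) = Real.exp (-((∑ k, α₀ k * cvec k) - ∑ l, γ l * gvec l) - 1)) :
    Real.log (e * (1 - e)) = (∑ k, (α₀ k + α₁ k) * cvec k) + 2 := by
  have h1e : 0 < 1 - e := by linarith
  have he : e = Real.exp (-(-((∑ k, α₁ k * cvec k) + ∑ l, γ l * gvec l) - 1)) := by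
    rw [Real.exp_neg, ← h1, one_div, inv_inv]
  have he' : 1 - e = Real.exp (-(-((∑ k, α₀ k * cvec k) - ∑ l, γ l * gvec l) - 1)) := by
    rw [Real.exp_neg, ← h0, one_div, inv_inv]
  have l1 : Real.log e = (∑ k, α₁ k * cvec k) + (∑ l, γ l * gvec l) + 1 := by
    rw [he, Real.log_exp]; ring
  have l2 : Real.log (1 - e) = (∑ k, α₀ k * cvec k) - (∑ l, γ l * gvec l) + 1 := by
    rw [he', Real.log_exp]; ring
  rw [Real.log_mul (ne_of_gt he0) (ne_of_gt h1e), l1, l2]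
  simp [add_mul, Finset.sum_add_distrib]
  ring
end

section
/- Let n ≥ 1, J be natural numbers, Z : Fin n → ℝ take only the values 0 and 1 with at least one i having Zᵢ = 1 and at least one i having Zᵢ = 0, and b : Fin n → Fin J → ℝ. Write b̄ = (1/n)·Σᵢ b i for the sample mean. Then the following are equivalent: (a) there exists w : Fin n → ℝ with wᵢ ≥ 0 for all i, (1/n)·Σᵢ wᵢ·Zᵢ = 1, (1/n)·Σᵢ wᵢ·(1−Zᵢ) = 1, (1/n)·Σᵢ wᵢ·Zᵢ·(b i) = b̄, and (1/n)·Σᵢ wᵢ·(1−Zᵢ)·(b i) = b̄; (b) b̄ lies in the convex hull of {b i : Zᵢ = 1} and b̄ lies in the convex hull of {b i : Zᵢ = 0} (convex hulls taken in ℝᴶ = Fin J → ℝ). -/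
open Finset

lemma aux_hull {n J : ℕ} (b : Fin n → Fin J → ℝ) (S : Set (Fin n)) (x : Fin J → ℝ) :
    x ∈ convexHull ℝ (b '' S) ↔
    ∃ v : Fin n → ℝ, (∀ i, 0 ≤ v i) ∧ (∀ i, i ∉ S → v i = 0) ∧
      ∑ i, v i = 1 ∧ ∑ i, v i • b i = x := by
  classical
  constructor
  · intro hx
    rw [_root_.convexHull_eq] at hx
    obtain ⟨ι, t, w, z, hw0, hw1, hz, hcm⟩ := hx
    choose f hfS hfb using fun (j : {j // j ∈ t}) => hz j j.2
    refine ⟨fun i => ∑ j ∈ t.attach, if f j = i then w j else 0, ?_, ?_, ?_, ?_⟩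
    · intro i
      refine Finset.sum_nonneg fun j _ => ?_
      split
      · exact hw0 j j.2
      · exact le_refl 0
    · intro i hi
      refine Finset.sum_eq_zero fun j _ => ?_
      rw [if_neg]
      intro h
      exact hi (h ▸ hfS j)
    · rw [Finset.sum_comm]
      rw [← hw1, ← Finset.sum_attach t w]
      refine Finset.sum_congr rfl fun j _ => ?_
      simp
    · have : ∀ i : Fin n, (∑ j ∈ t.attach, if f j = i then w j else 0) • b i
          = ∑ j ∈ t.attach, (if f j = i then w j else 0) • b i := by
        intro i; rw [Finset.sum_smul]
      simp_rw [this]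
      rw [Finset.sum_comm]
      rw [← hcm, Finset.centerMass_eq_of_sum_1 _ _ hw1, ← Finset.sum_attach t (fun j => w j • z j)]
      refine Finset.sum_congr rfl fun j _ => ?_
      rw [Finset.sum_eq_single (f j)]
      · rw [if_pos rfl, hfb j]
      · intro i _ hi
        rw [if_neg (fun h => hi h.symm), zero_smul]
      · intro h; exact absurd (Finset.mem_univ _) h
  · rintro ⟨v, hv0, hvS, hv1, hvb⟩
    have hsum : ∑ i ∈ univ.filter (· ∈ S), v i = 1 := by
      rw [Finset.sum_filter_of_ne, hv1]
      intro i _ h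
      by_contra hiS
      exact h (hvS i hiS)
    have hmem := Finset.centerMass_mem_convexHull (s := b '' S) (univ.filter (· ∈ S))
      (fun i _ => hv0 i) (hsum ▸ one_pos)
      (fun i hi => Set.mem_image_of_mem b (Finset.mem_filter.mp hi).2)
    rwa [Finset.centerMass_eq_of_sum_1 _ _ hsum, Finset.sum_filter_of_ne, hvb] at hmem
    intro i _ h
    by_contra hiS
    simp [hvS i hiS] at h

theorem stmt_10 (n J : ℕ) (hn : 1 ≤ n) (Z : Fin n → ℝ)
    (hZ : ∀ i, Z i = 0 ∨ Z i = 1)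
    (htreated : ∃ i, Z i = 1) (hcontrol : ∃ i, Z i = 0)
    (b : Fin n → Fin J → ℝ) (bbar : Fin J → ℝ)
    (hbbar : bbar = (1 / (n : ℝ)) • ∑ i, b i) :
    (∃ w : Fin n → ℝ, (∀ i, 0 ≤ w i) ∧
        (1 / (n : ℝ)) * ∑ i, w i * Z i = 1 ∧
        (1 / (n : ℝ)) * ∑ i, w i * (1 - Z i) = 1 ∧
        (1 / (n : ℝ)) • ∑ i, (w i * Z i) • b i = bbar ∧
        (1 / (n : ℝ)) • ∑ i, (w i * (1 - Z i)) • b i = bbar) ↔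
      (bbar ∈ convexHull ℝ (b '' {i | Z i = 1}) ∧
        bbar ∈ convexHull ℝ (b '' {i | Z i = 0})) := by
  have hn0 : (n : ℝ) ≠ 0 := by positivity
  constructor
  · rintro ⟨w, hw0, hs1, hs0, hb1, hb0⟩
    constructor
    · rw [aux_hull]
      refine ⟨fun i => (1 / (n : ℝ)) * (w i * Z i), ?_, ?_, ?_, ?_⟩
      · intro i
        have h1 : 0 ≤ Z i := by rcases hZ i with h | h <;> rw [h] <;> norm_num
        have h2 := hw0 i
        dsimp only
        positivity
      · intro i hi
        have : Z i = 0 := (hZ i).resolve_right hi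
        simp [this]
      · rw [← Finset.mul_sum]; exact hs1
      · rw [← hb1, Finset.smul_sum]
        exact Finset.sum_congr rfl fun i _ => (mul_smul _ _ _)
    · rw [aux_hull]
      refine ⟨fun i => (1 / (n : ℝ)) * (w i * (1 - Z i)), ?_, ?_, ?_, ?_⟩
      · intro i
        have h1 : 0 ≤ 1 - Z i := by rcases hZ i with h | h <;> rw [h] <;> norm_num
        have h2 := hw0 i
        dsimp only
        positivity
      · intro i hi
        have : Z i = 1 := (hZ i).resolve_left hi
        simp [this]
      · rw [← Finset.mul_sum]; exact hs0
      · rw [← hb0, Finset.smul_sum]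
        exact Finset.sum_congr rfl fun i _ => (mul_smul _ _ _)
  · rintro ⟨h1, h0⟩
    rw [aux_hull] at h1 h0
    obtain ⟨v1, hv10, hv1S, hv11, hv1b⟩ := h1
    obtain ⟨v0, hv00, hv0S, hv01, hv0b⟩ := h0
    refine ⟨fun i => n * (v1 i + v0 i), ?_, ?_, ?_, ?_, ?_⟩
    · intro i
      have h1 := hv10 i; have h2 := hv00 i
      dsimp only
      positivity
    all_goals {
      have key1 : ∀ i, (n * (v1 i + v0 i)) * Z i = n * v1 i := by
        intro i
        rcases hZ i with h | h
        · have : v1 i = 0 := hv1S i (by simp [Set.mem_setOf_eq, h])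
          rw [h, this]; ring
        · have : v0 i = 0 := hv0S i (by simp [Set.mem_setOf_eq, h])
          rw [h, this]; ring
      have key0 : ∀ i, (n * (v1 i + v0 i)) * (1 - Z i) = n * v0 i := by
        intro i
        rcases hZ i with h | h
        · have : v1 i = 0 := hv1S i (by simp [Set.mem_setOf_eq, h])
          rw [h, this]; ring
        · have : v0 i = 0 := hv0S i (by simp [Set.mem_setOf_eq, h])
          rw [h, this]; ring
      first
      | (simp_rw [key1, ← Finset.mul_sum, hv11]; field_simp)
      | (simp_rw [key0, ← Finset.mul_sum, hv01]; field_simp)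
      | (simp_rw [key1, mul_smul, ← Finset.smul_sum, hv1b, smul_smul]
         rw [one_div, inv_mul_cancel₀ hn0, one_smul])
      | (simp_rw [key0, mul_smul, ← Finset.smul_sum, hv0b, smul_smul]
         rw [one_div, inv_mul_cancel₀ hn0, one_smul])
    }
end

section
/- Let n ≥ 1, K, L be natural numbers, Z : Fin n → ℝ take only the values 0 and 1 with at least one i having Zᵢ = 1 and at least one i having Zᵢ = 0, c : Fin n → Fin K → ℝ, and g : Fin n → Fin L → ℝ. Write c̄ = (1/n)·Σᵢ c i. Suppose there exists q : Fin L → ℝ such that the point (c̄, q) ∈ (Fin K → ℝ) × (Fin L → ℝ) lies in the convex hull of {(c i, g i) : Zᵢ = 1} and also in the convex hull of {(c i, g i) : Zᵢ = 0}. Then there exists w : Fin n → ℝ with wᵢ ≥ 0 for all i, (1/n)·Σᵢ wᵢ·Zᵢ = 1, (1/n)·Σᵢ wᵢ·(1−Zᵢ) = 1, (1/n)·Σᵢ wᵢ·Zᵢ·(c i) = c̄, (1/n)·Σᵢ wᵢ·(1−Zᵢ)·(c i) = c̄, and Σᵢ wᵢ·Zᵢ·(g i) = Σᵢ wᵢ·(1−Zᵢ)·(g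 i). -/
open Finset

lemma conv_weights {n : ℕ} {E : Type*} [AddCommGroup E] [Module ℝ E]
    (f : Fin n → E) (S : Set (Fin n)) {x : E}
    (hx : x ∈ convexHull ℝ (f '' S)) :
    ∃ a : Fin n → ℝ, (∀ i, 0 ≤ a i) ∧ (∀ i, i ∉ S → a i = 0) ∧
      ∑ i, a i = 1 ∧ ∑ i, a i • f i = x := by
  classical
  rw [mem_convexHull_iff_exists_fintype] at hx
  obtain ⟨ι, _, w, z, hw0, hw1, hz, hsum⟩ := hx
  choose idx hidxS hidxf using fun i => hz i
  refine ⟨fun j => ∑ i ∈ univ.filter (fun i => idx i = j), w i, ?_, ?_, ?_, ?_⟩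
  · intro j; exact Finset.sum_nonneg fun i _ => hw0 i
  · intro j hj
    apply Finset.sum_eq_zero
    intro i hi
    simp only [mem_filter] at hi
    exact absurd (hi.2 ▸ hidxS i) hj
  · rw [← hw1]
    simpa using Finset.sum_fiberwise_eq_sum_filter univ univ idx w
  · rw [← hsum]
    have : ∀ j : Fin n, (∑ i ∈ univ.filter (fun i => idx i = j), w i) • f j
        = ∑ i ∈ univ.filter (fun i => idx i = j), w i • z i := by
      intro j
      rw [Finset.sum_smul]
      apply Finset.sum_congr rfl
      intro i hi
      simp only [mem_filter] at hi
      rw [← hi.2, hidxf i]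
    simp_rw [this]
    simpa using Finset.sum_fiberwise_eq_sum_filter univ univ idx (fun i => w i • z i)

theorem stmt_11 (n K L : ℕ) (hn : 1 ≤ n) (Z : Fin n → ℝ)
    (hZ : ∀ i, Z i = 0 ∨ Z i = 1)
    (htreated : ∃ i, Z i = 1) (hcontrol : ∃ i, Z i = 0)
    (c : Fin n → Fin K → ℝ) (g : Fin n → Fin L → ℝ)
    (cbar : Fin K → ℝ) (hcbar : cbar = (1 / (n : ℝ)) • ∑ i, c i)
    (q : Fin L → ℝ)
    (hq1 : (cbar, q) ∈ convexHull ℝ ((fun i => (c i, g i)) '' {i | Z i = 1}))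
    (hq0 : (cbar, q) ∈ convexHull ℝ ((fun i => (c i, g i)) '' {i | Z i = 0})) :
    ∃ w : Fin n → ℝ, (∀ i, 0 ≤ w i) ∧
      (1 / (n : ℝ)) * ∑ i, w i * Z i = 1 ∧
      (1 / (n : ℝ)) * ∑ i, w i * (1 - Z i) = 1 ∧
      (1 / (n : ℝ)) • ∑ i, (w i * Z i) • c i = cbar ∧
      (1 / (n : ℝ)) • ∑ i, (w i * (1 - Z i)) • c i = cbar ∧
      ∑ i, (w i * Z i) • g i = ∑ i, (w i * (1 - Z i)) • g i := by
  obtain ⟨a, ha0, haS, hasum, havec⟩ := conv_weights _ _ hq1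
  obtain ⟨b, hb0, hbS, hbsum, hbvec⟩ := conv_weights _ _ hq0
  have hnne : (n : ℝ) ≠ 0 := by positivity
  refine ⟨fun i => n * (a i + b i), ?_, ?_, ?_, ?_, ?_, ?_⟩
  · intro i
    have h1 := ha0 i
    have h2 := hb0 i
    have : (0:ℝ) ≤ n := Nat.cast_nonneg n
    positivity
  all_goals {
    have key1 : ∀ i, (n * (a i + b i)) * Z i = n * a i := by
      intro i
      rcases hZ i with h | h
      · have : a i = 0 := haS i (by simp [h])
        simp [h, this]
      · have : b i = 0 := hbS i (by simp [h])
        simp [h, this]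
        try ring
    have key0 : ∀ i, (n * (a i + b i)) * (1 - Z i) = n * b i := by
      intro i
      rcases hZ i with h | h
      · have : a i = 0 := haS i (by simp [h])
        simp [h, this]
        try ring
      · have : b i = 0 := hbS i (by simp [h])
        simp [h, this]
    have hac : ∑ i, a i • c i = cbar := by
      have := congrArg Prod.fst havec
      simpa [Prod.fst_sum] using this
    have hag : ∑ i, a i • g i = q := by
      have := congrArg Prod.snd havec
      simpa [Prod.snd_sum] using this
    have hbc : ∑ i, b i • c i = cbar := by
      have := congrArg Prod.fst hbvec
      simpa [Prod.fst_sum] using this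
    have hbg : ∑ i, b i • g i = q := by
      have := congrArg Prod.snd hbvec
      simpa [Prod.snd_sum] using this
    simp only [key1, key0]
    first
    | (rw [← Finset.mul_sum, hasum]; field_simp)
    | (rw [← Finset.mul_sum, hbsum]; field_simp)
    | (simp_rw [mul_smul]
       rw [← Finset.smul_sum]
       first
       | (rw [hac, smul_smul, one_div, inv_mul_cancel₀ hnne, one_smul])
       | (rw [hbc, smul_smul, one_div, inv_mul_cancel₀ hnne, one_smul])
       | (rw [← Finset.smul_sum, hag, hbg]))
  }
end

section
/- Let n ≥ 1, K, L be natural numbers, Z : Fin n → ℝ take only the values 0 and 1, c : Fin n → Fin K → ℝ, g : Fin n → Fin L → ℝ, Y : Fin n → ℝ, and w : Fin n → ℝ satisfy the balance constraints. Let β̂₀, β̂₁ : Fin K → ℝ and λ̂ : Fin L → ℝ, and define fitted outcome models μ̂₁(i) = ⟨β̂₁, c i⟩ + ⟨λ̂, g i⟩ and μ̂₀(i) = ⟨β̂₀, c i⟩ + ⟨λ̂, g i⟩. Then the augmented (doubly robust) estimator equals the plain weighted estimator: (1/n)·Σᵢ [ wᵢ·Zᵢ·(Yᵢ − μ̂₁(i))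 + μ̂₁(i) ] − (1/n)·Σᵢ [ wᵢ·(1−Zᵢ)·(Yᵢ − μ̂₀(i)) + μ̂₀(i) ] = (1/n)·Σᵢ wᵢ·Zᵢ·Yᵢ − (1/n)·Σᵢ wᵢ·(1−Zᵢ)·Yᵢ. -/
theorem stmt_13 (n K L : ℕ) (hn : 1 ≤ n) (Z : Fin n → ℝ)
    (hZ : ∀ i, Z i = 0 ∨ Z i = 1)
    (c : Fin n → Fin K → ℝ) (g : Fin n → Fin L → ℝ)
    (Y : Fin n → ℝ) (w : Fin n → ℝ)
    (hbal1 : ∀ k, (1 / (n : ℝ)) * ∑ i, w i * Z i * c i k = (1 / (n : ℝ)) * ∑ i, c i k)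
    (hbal0 : ∀ k, (1 / (n : ℝ)) * ∑ i, w i * (1 - Z i) * c i k = (1 / (n : ℝ)) * ∑ i, c i k)
    (hbalg : ∀ l, ∑ i, w i * Z i * g i l = ∑ i, w i * (1 - Z i) * g i l)
    (β₀ β₁ : Fin K → ℝ) (lam : Fin L → ℝ)
    (μ₁ μ₀ : Fin n → ℝ)
    (hμ₁ : ∀ i, μ₁ i = (∑ k, β₁ k * c i k) + ∑ l, lam l * g i l)
    (hμ₀ : ∀ i, μ₀ i = (∑ k, β₀ k * c i k) + ∑ l, lam l * g i l) :
    (1 / (n : ℝ)) * (∑ i, (w i * Z i * (Y i - μ₁ i) + μ₁ i))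
      - (1 / (n : ℝ)) * (∑ i, (w i * (1 - Z i) * (Y i - μ₀ i) + μ₀ i)) =
    (1 / (n : ℝ)) * (∑ i, w i * Z i * Y i)
      - (1 / (n : ℝ)) * (∑ i, w i * (1 - Z i) * Y i) := by
  have hn0 : (1 / (n : ℝ)) ≠ 0 := by
    have : (n : ℝ) ≠ 0 := by exact_mod_cast Nat.one_le_iff_ne_zero.mp hn
    simpa using this
  have hc1 : ∀ k, ∑ i, w i * Z i * c i k = ∑ i, c i k :=
    fun k => mul_left_cancel₀ hn0 (hbal1 k)
  have hc0 : ∀ k, ∑ i, w i * (1 - Z i) * c i k = ∑ i, c i k :=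
    fun k => mul_left_cancel₀ hn0 (hbal0 k)
  have expand : ∀ (a : Fin n → ℝ) (β : Fin K → ℝ),
      ∑ i, a i * ((∑ k, β k * c i k) + ∑ l, lam l * g i l)
        = (∑ k, β k * ∑ i, a i * c i k) + ∑ l, lam l * ∑ i, a i * g i l := by
    intro a β
    simp_rw [mul_add, Finset.sum_add_distrib, Finset.mul_sum]
    congr 1 <;> rw [Finset.sum_comm] <;>
      exact Finset.sum_congr rfl fun _ _ => Finset.sum_congr rfl fun _ _ => by ring
  have sμ : ∀ (β : Fin K → ℝ),
      ∑ i, ((∑ k, β k * c i k) + ∑ l, lam l * g i l)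
        = (∑ k, β k * ∑ i, c i k) + ∑ l, lam l * ∑ i, g i l := by
    intro β
    have := expand (fun _ => 1) β
    simpa using this
  have key : ∑ i, (w i * Z i * μ₁ i - μ₁ i) = ∑ i, (w i * (1 - Z i) * μ₀ i - μ₀ i) := by
    simp_rw [Finset.sum_sub_distrib, hμ₁, hμ₀]
    rw [expand (fun i => w i * Z i) β₁, expand (fun i => w i * (1 - Z i)) β₀, sμ β₁, sμ β₀]
    simp_rw [hc1, hc0, hbalg]; ring
  have rearr : ∀ (a μ' : Fin n → ℝ),
      ∑ i, (a i * (Y i - μ' i) + μ' i) = (∑ i, a i * Y i) - ∑ i, (a i * μ' i - μ' i) := by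
    intro a μ'
    rw [← Finset.sum_sub_distrib]
    exact Finset.sum_congr rfl fun _ _ => by ring
  rw [rearr (fun i => w i * Z i) μ₁, rearr (fun i => w i * (1 - Z i)) μ₀, key]
  ring
end

section
/- Let n ≥ 1, K, L be natural numbers, Z : Fin n → ℝ take only the values 0 and 1, c : Fin n → Fin K → ℝ, g : Fin n → Fin L → ℝ, and w : Fin n → ℝ satisfy the balance constraints. Let β₁, β₀ : Fin K → ℝ, λ₁, λ₀ : Fin L → ℝ, and define μ₁(i) = ⟨β₁, c i⟩ + ⟨λ₁, g i⟩ and μ₀(i) = ⟨β₀, c i⟩ + ⟨λ₀, g i⟩, and μ_{Zᵢ}(i) = Zᵢ·μ₁(i) + (1−Zᵢ)·μ₀(i). Then the estimand-mismatch error term satisfies (1/n)·Σᵢ [ wᵢ·Zᵢ·μ_{Zᵢ}(i) − μ₁(i) ] − (1/n)·Σᵢ [ wᵢ·(1−Zᵢ)·μ_{Zᵢ}(i) − μ₀(i) ] = ⟨λ₁ − λ₀, (1/n)·Σᵢ wᵢ·Zᵢ·(g i) − (1/n)·Σᵢ (g i)⟩. In particular, this term is zero whenever λ₁ = λ₀,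 i.e., whenever the covariate functions g carry no treatment effect modification. -/
theorem stmt_14 (n K L : ℕ) (hn : 1 ≤ n) (Z : Fin n → ℝ)
    (hZ : ∀ i, Z i = 0 ∨ Z i = 1)
    (c : Fin n → Fin K → ℝ) (g : Fin n → Fin L → ℝ)
    (w : Fin n → ℝ)
    (hbal1 : ∀ k, (1 / (n : ℝ)) * ∑ i, w i * Z i * c i k = (1 / (n : ℝ)) * ∑ i, c i k)
    (hbal0 : ∀ k, (1 / (n : ℝ)) * ∑ i, w i * (1 - Z i) * c i k = (1 / (n : ℝ)) * ∑ i, c i k)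
    (hbalg : ∀ l, ∑ i, w i * Z i * g i l = ∑ i, w i * (1 - Z i) * g i l)
    (β₁ β₀ : Fin K → ℝ) (lam₁ lam₀ : Fin L → ℝ)
    (μ₁ μ₀ μZ : Fin n → ℝ)
    (hμ₁ : ∀ i, μ₁ i = (∑ k, β₁ k * c i k) + ∑ l, lam₁ l * g i l)
    (hμ₀ : ∀ i, μ₀ i = (∑ k, β₀ k * c i k) + ∑ l, lam₀ l * g i l)
    (hμZ : ∀ i, μZ i = Z i * μ₁ i + (1 - Z i) * μ₀ i) :
    (1 / (n : ℝ)) * (∑ i, (w i * Z i * μZ i - μ₁ i))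
      - (1 / (n : ℝ)) * (∑ i, (w i * (1 - Z i) * μZ i - μ₀ i)) =
    ∑ l, (lam₁ l - lam₀ l) *
      ((1 / (n : ℝ)) * (∑ i, w i * Z i * g i l) - (1 / (n : ℝ)) * ∑ i, g i l) := by
  have hn0 : (1 / (n : ℝ)) ≠ 0 := by
    have : (0:ℝ) < n := by exact_mod_cast Nat.lt_of_lt_of_le Nat.zero_lt_one hn
    positivity
  have hc1 : ∀ k, ∑ i, w i * Z i * c i k = ∑ i, c i k :=
    fun k => mul_left_cancel₀ hn0 (hbal1 k)
  have hc0 : ∀ k, ∑ i, w i * (1 - Z i) * c i k = ∑ i, c i k :=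
    fun k => mul_left_cancel₀ hn0 (hbal0 k)
  have key : ∀ i, w i * Z i * μZ i - μ₁ i - (w i * (1 - Z i) * μZ i - μ₀ i)
      = (∑ k, (w i * Z i - 1) * (β₁ k * c i k)) + (∑ l, (w i * Z i - 1) * (lam₁ l * g i l))
        - ((∑ k, (w i * (1 - Z i) - 1) * (β₀ k * c i k))
          + (∑ l, (w i * (1 - Z i) - 1) * (lam₀ l * g i l))) := by
    intro i
    rw [hμZ i, hμ₁ i, hμ₀ i, ← Finset.mul_sum, ← Finset.mul_sum, ← Finset.mul_sum,
      ← Finset.mul_sum]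
    rcases hZ i with h | h <;> rw [h] <;> ring
  have e1 : ∑ i, ∑ k, (w i * Z i - 1) * (β₁ k * c i k)
      = ∑ k, ((∑ i, w i * Z i * c i k) - ∑ i, c i k) * β₁ k := by
    rw [Finset.sum_comm]
    refine Finset.sum_congr rfl fun k _ => ?_
    rw [sub_mul, Finset.sum_mul, Finset.sum_mul, ← Finset.sum_sub_distrib]
    exact Finset.sum_congr rfl fun i _ => by ring
  have e2 : ∑ i, ∑ l, (w i * Z i - 1) * (lam₁ l * g i l)
      = ∑ l, ((∑ i, w i * Z i * g i l) - ∑ i, g i l) * lam₁ l := by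
    rw [Finset.sum_comm]
    refine Finset.sum_congr rfl fun l _ => ?_
    rw [sub_mul, Finset.sum_mul, Finset.sum_mul, ← Finset.sum_sub_distrib]
    exact Finset.sum_congr rfl fun i _ => by ring
  have e3 : ∑ i, ∑ k, (w i * (1 - Z i) - 1) * (β₀ k * c i k)
      = ∑ k, ((∑ i, w i * (1 - Z i) * c i k) - ∑ i, c i k) * β₀ k := by
    rw [Finset.sum_comm]
    refine Finset.sum_congr rfl fun k _ => ?_
    rw [sub_mul, Finset.sum_mul, Finset.sum_mul, ← Finset.sum_sub_distrib]
    exact Finset.sum_congr rfl fun i _ => by ring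
  have e4 : ∑ i, ∑ l, (w i * (1 - Z i) - 1) * (lam₀ l * g i l)
      = ∑ l, ((∑ i, w i * (1 - Z i) * g i l) - ∑ i, g i l) * lam₀ l := by
    rw [Finset.sum_comm]
    refine Finset.sum_congr rfl fun l _ => ?_
    rw [sub_mul, Finset.sum_mul, Finset.sum_mul, ← Finset.sum_sub_distrib]
    exact Finset.sum_congr rfl fun i _ => by ring
  calc (1 / (n : ℝ)) * (∑ i, (w i * Z i * μZ i - μ₁ i))
      - (1 / (n : ℝ)) * (∑ i, (w i * (1 - Z i) * μZ i - μ₀ i))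
      = (1 / (n : ℝ)) * ∑ i, (w i * Z i * μZ i - μ₁ i - (w i * (1 - Z i) * μZ i - μ₀ i)) := by
        rw [← mul_sub, ← Finset.sum_sub_distrib]
    _ = (1 / (n : ℝ)) *
        ((∑ k, ((∑ i, w i * Z i * c i k) - ∑ i, c i k) * β₁ k)
          + (∑ l, ((∑ i, w i * Z i * g i l) - ∑ i, g i l) * lam₁ l)
          - ((∑ k, ((∑ i, w i * (1 - Z i) * c i k) - ∑ i, c i k) * β₀ k)
            + (∑ l, ((∑ i, w i * (1 - Z i) * g i l) - ∑ i, g i l) * lam₀ l))) := by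
        congr 1
        simp only [key]
        rw [Finset.sum_sub_distrib, Finset.sum_add_distrib, Finset.sum_add_distrib, e1, e2, e3, e4]
    _ = ∑ l, (lam₁ l - lam₀ l) *
        ((1 / (n : ℝ)) * (∑ i, w i * Z i * g i l) - (1 / (n : ℝ)) * ∑ i, g i l) := by
        simp only [hc1, hc0, sub_self, zero_mul, Finset.sum_const_zero, zero_add, ← hbalg]
        rw [← Finset.sum_sub_distrib, Finset.mul_sum]
        exact Finset.sum_congr rfl fun l _ => by ring
end
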